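/- Fix N ≥ 1, t ∈ ℕ, a set Z ⊆ ℝ, vectors y_0, …, y_t ∈ ℝ^N, constants K_μ ≥ 0, μ_sup ≥ 0, K_INV ≥ 0, K_D ≥ 0, λ > 1. For each i ∈ {0,…,t} let μ_i : Z → ℝ^N and C_i : Z → Matrix (Fin N) (Fin N) ℝ satisfy, for all x, x' ∈ Z: C_i(x) is symmetric positive definite with all eigenvalues at least λ; ‖C_i(x)^{-1} − C_i(x')^{-1}‖₂ ≤ K_INV|x − x'|; |det(C_i(x)) − det(C_i(x'))| ≤ K_D|x − x'|; ‖μ_i(x) − μ_i(x')‖ ≤ K_μ|x − x'|; and ‖μ_i(x)‖ ≤ μ_sup. For x = (x_0,…,x_t) ∈ Z^{t+1} define Λ̂(x) := exp(−½ ∑_{i=0}^{t} ⟨y_i − μ_i(x_i), C_i(x_i)^{-1}(y_i − μ_i(x_i))⟩) / ∏_{i=0}^{t} sqrt(det(C_i(x_i))), and define Θ* := max_{i ∈ {0,…,t}} [ 2·K_μ·(‖y_i‖ + μ_sup)/λ + K_INV·(‖y_i‖ + μ_sup)² ]. Then for all x, x' ∈ Z^{t+1}: |Λ̂(x) − Λ̂(x')|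 ≤ ( Θ*/λ^{N(t+1)/2} + K_D/(2·λ^{N(t+2)/2}) ) · ∑_{i=0}^{t} |x_i − x_i'|. -/

import Mathlib

open Matrix

/-- The Euclidean norm on `ℝ^N`. -/
noncomputable def eucNorm {N : ℕ} (v : Fin N → ℝ) : ℝ :=
  Real.sqrt (∑ j, v j ^ 2)

/-- The spectral (operator) norm of a real `N × N` matrix: the supremum of the Euclidean
norms `‖M v‖` over vectors `v` in the Euclidean unit ball. -/
noncomputable def specNorm {N : ℕ} (M : Matrix (Fin N) (Fin N) ℝ) : ℝ :=
  ⨆ v : { v : Fin N → ℝ // eucNorm v ≤ 1 }, eucNorm (M.mulVec v)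

/-- The observation-normalized likelihood `Λ̂(x)` of a state trajectory `x` given fixed
observations `y_0, …, y_t`, for the conditionally Gaussian observation model
`y_i ~ N(μ_i(x_i), C_i(x_i))`. -/
noncomputable def Lhat {N t : ℕ} (y : Fin (t + 1) → Fin N → ℝ)
    (mu : Fin (t + 1) → ℝ → Fin N → ℝ)
    (C : Fin (t + 1) → ℝ → Matrix (Fin N) (Fin N) ℝ) (x : Fin (t + 1) → ℝ) : ℝ :=
  Real.exp (-(1 / 2) *
      ∑ i, (y i - mu i (x i)) ⬝ᵥ (C i (x i))⁻¹.mulVec (y i - mu i (x i))) /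
    ∏ i, Real.sqrt ((C i (x i)).det)

/-!
Write `Λ̂(x) = exp (-½ Q(x)) / ∏ᵢ sᵢ` with `Q ≥ 0` the sum of the quadratic forms and
`sᵢ = √(det Cᵢ(xᵢ)) ≥ c := λ^(N/2) ≥ 1`. As `exp` is `1`-Lipschitz on `(-∞, 0]` and every
`sᵢ⁻¹` lies in `(0, c⁻¹]`, `|Λ̂(x) - Λ̂(x')|` is at most
`c^-(t+1) · ½ |Q(x) - Q(x')| + c^-t · ∑ᵢ |sᵢ⁻¹ - sᵢ'⁻¹|`. A residual `v = yᵢ - μᵢ` has norm at most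
`‖yᵢ‖ + μ_sup` and `‖Cᵢ⁻¹‖ ≤ 1/λ`, so the `i`-th quadratic form moves by at most
`Θ* |xᵢ - xᵢ'|`; and `det Cᵢ ≥ λ^N = c²` gives `|sᵢ⁻¹ - sᵢ'⁻¹| ≤ K_D |xᵢ - xᵢ'| / (2c³)`.
-/

variable {N : ℕ}

lemma eucNorm_eq_norm_toLp (v : Fin N → ℝ) : eucNorm v = ‖WithLp.toLp 2 v‖ := by
  simp [eucNorm, EuclideanSpace.norm_eq, sq_abs]

lemma eucNorm_nonneg (v : Fin N → ℝ) : 0 ≤ eucNorm v := Real.sqrt_nonneg _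

lemma eucNorm_sub_le (u v : Fin N → ℝ) : eucNorm (u - v) ≤ eucNorm u + eucNorm v := by
  simpa only [eucNorm_eq_norm_toLp, WithLp.toLp_sub] using norm_sub_le _ _

lemma eucNorm_sub_comm (u v : Fin N → ℝ) : eucNorm (u - v) = eucNorm (v - u) := by
  simp only [eucNorm_eq_norm_toLp, WithLp.toLp_sub, norm_sub_rev]

lemma abs_dotProduct_le_eucNorm_mul (u v : Fin N → ℝ) : |u ⬝ᵥ v| ≤ eucNorm u * eucNorm v := by
  simpa only [eucNorm_eq_norm_toLp, EuclideanSpace.inner_toLp_toLp, star_trivial,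
    dotProduct_comm v u, mul_comm] using abs_real_inner_le_norm (WithLp.toLp 2 v) (WithLp.toLp 2 u)

lemma dotProduct_self_eq_eucNorm_sq (v : Fin N → ℝ) : v ⬝ᵥ v = eucNorm v ^ 2 := by
  rw [eucNorm_eq_norm_toLp, ← real_inner_self_eq_norm_sq, EuclideanSpace.inner_toLp_toLp,
    star_trivial]

lemma eucNorm_mulVec_le_specNorm (M : Matrix (Fin N) (Fin N) ℝ) {v : Fin N → ℝ}
    (hv : eucNorm v ≤ 1) : eucNorm (M *ᵥ v) ≤ specNorm M := by
  refine le_ciSup (f := fun v : {v : Fin N → ℝ // eucNorm v ≤ 1} ↦ eucNorm (M *ᵥ v))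
    ⟨‖Matrix.toEuclideanCLM (𝕜 := ℝ) M‖, ?_⟩ ⟨v, hv⟩
  rintro _ ⟨⟨w, hw⟩, rfl⟩
  rw [eucNorm_eq_norm_toLp] at hw
  change eucNorm (M *ᵥ w) ≤ _
  rw [eucNorm_eq_norm_toLp, ← Matrix.toEuclideanCLM_toLp]
  exact (ContinuousLinearMap.le_opNorm _ _).trans (mul_le_of_le_one_right (norm_nonneg _) hw)

lemma specNorm_nonneg (M : Matrix (Fin N) (Fin N) ℝ) : 0 ≤ specNorm M :=
  (eucNorm_nonneg _).trans (eucNorm_mulVec_le_specNorm M (v := 0) (by simp [eucNorm]))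

lemma eucNorm_mulVec_le_specNorm_mul (M : Matrix (Fin N) (Fin N) ℝ) (v : Fin N → ℝ) :
    eucNorm (M *ᵥ v) ≤ specNorm M * eucNorm v := by
  rcases (eucNorm_nonneg v).eq_or_lt with h | h
  · have : v = 0 := by
      simpa using (norm_eq_zero.mp ((eucNorm_eq_norm_toLp v).symm.trans h.symm))
    simp [this, eucNorm]
  · have hunit : eucNorm ((eucNorm v)⁻¹ • v) ≤ 1 := by
      rw [eucNorm_eq_norm_toLp, WithLp.toLp_smul, norm_smul, ← eucNorm_eq_norm_toLp,
        Real.norm_of_nonneg (inv_nonneg.2 h.le), inv_mul_cancel₀ h.ne']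
    have := eucNorm_mulVec_le_specNorm M hunit
    rw [Matrix.mulVec_smul, eucNorm_eq_norm_toLp, WithLp.toLp_smul, norm_smul,
      ← eucNorm_eq_norm_toLp, Real.norm_of_nonneg (inv_nonneg.2 h.le), inv_mul_le_iff₀ h] at this
    linarith

namespace Matrix

variable {n : Type*} [DecidableEq n] {M : Matrix n n ℝ} {lam : ℝ}

lemma PosSemidef.smul_dotProduct_self_le_of_sub_smul_one [Fintype n]
    (h : (M - lam • (1 : Matrix n n ℝ)).PosSemidef) (v : n → ℝ) :
    lam * (v ⬝ᵥ v) ≤ v ⬝ᵥ M *ᵥ v := by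
  have := h.dotProduct_mulVec_nonneg v
  simp only [star_trivial, sub_mulVec, smul_mulVec, one_mulVec, dotProduct_sub,
    dotProduct_smul, smul_eq_mul] at this
  linarith

lemma PosSemidef.posDef_of_sub_smul_one (hlam : 0 < lam)
    (h : (M - lam • (1 : Matrix n n ℝ)).PosSemidef) : M.PosDef := by
  simpa using PosDef.posSemidef_add h (PosDef.one.smul hlam)

lemma PosSemidef.pow_card_le_det_of_sub_smul_one [Fintype n] (hlam : 0 < lam)
    (h : (M - lam • (1 : Matrix n n ℝ)).PosSemidef) : lam ^ Fintype.card n ≤ M.det := by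
  have hM := (h.posDef_of_sub_smul_one hlam).isHermitian
  have heig : ∀ i, lam ≤ hM.eigenvalues i := by
    intro i
    set v := hM.eigenvectorBasis i
    have hv : v.ofLp ⬝ᵥ v.ofLp = 1 := by
      have := real_inner_self_eq_norm_sq v
      rw [hM.eigenvectorBasis.orthonormal.1 i, EuclideanSpace.inner_eq_star_dotProduct] at this
      simpa using this
    have := h.smul_dotProduct_self_le_of_sub_smul_one v.ofLp
    rw [hv, mul_one] at this
    simpa [hM.eigenvalues_eq i] using this
  rw [hM.det_eq_prod_eigenvalues, ← Finset.card_univ, ← Finset.prod_const]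
  exact Finset.prod_le_prod (fun _ _ ↦ hlam.le) fun i _ ↦ by simpa using heig i

end Matrix

lemma eucNorm_inv_mulVec_le {M : Matrix (Fin N) (Fin N) ℝ} {lam : ℝ} (hlam : 0 < lam)
    (h : (M - lam • (1 : Matrix (Fin N) (Fin N) ℝ)).PosSemidef) (v : Fin N → ℝ) :
    eucNorm (M⁻¹ *ᵥ v) ≤ eucNorm v / lam := by
  set u := M⁻¹ *ᵥ v
  have hMu : M *ᵥ u = v := by
    rw [mulVec_mulVec, mul_nonsing_inv _ (h.posDef_of_sub_smul_one hlam).det_pos.ne'.isUnit,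
      one_mulVec]
  have hquad := h.smul_dotProduct_self_le_of_sub_smul_one u
  rw [hMu, dotProduct_self_eq_eucNorm_sq] at hquad
  have hcs := (le_abs_self _).trans (abs_dotProduct_le_eucNorm_mul u v)
  rw [le_div_iff₀ hlam]
  nlinarith [eucNorm_nonneg u, eucNorm_nonneg v]

lemma abs_dotProduct_mulVec_sub_le {A A' : Matrix (Fin N) (Fin N) ℝ} {v v' : Fin N → ℝ}
    {lam Y d κ : ℝ} (hlam : 0 ≤ lam) (hA : ∀ w, eucNorm (A *ᵥ w) ≤ eucNorm w / lam)
    (hv : eucNorm v ≤ Y) (hv' : eucNorm v' ≤ Y) (hd : eucNorm (v - v') ≤ d)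
    (hκ : specNorm (A - A') ≤ κ) :
    |v ⬝ᵥ A *ᵥ v - v' ⬝ᵥ A' *ᵥ v'| ≤ 2 * d * Y / lam + κ * Y ^ 2 := by
  have hY : 0 ≤ Y := (eucNorm_nonneg v).trans hv
  have hAv : eucNorm (A *ᵥ v) ≤ Y / lam := (hA v).trans (by gcongr)
  have hAd : eucNorm (A *ᵥ (v - v')) ≤ d / lam := (hA _).trans (by gcongr)
  have hAA' : eucNorm ((A - A') *ᵥ v') ≤ κ * Y :=
    (eucNorm_mulVec_le_specNorm_mul _ _).trans
      (mul_le_mul hκ hv' (eucNorm_nonneg _) ((specNorm_nonneg _).trans hκ))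
  have hsplit : v ⬝ᵥ A *ᵥ v - v' ⬝ᵥ A' *ᵥ v' =
      (v - v') ⬝ᵥ A *ᵥ v + v' ⬝ᵥ A *ᵥ (v - v') + v' ⬝ᵥ (A - A') *ᵥ v' := by
    simp only [sub_dotProduct, dotProduct_sub, mulVec_sub, sub_mulVec]
    ring
  have h₁ := (abs_dotProduct_le_eucNorm_mul (v - v') (A *ᵥ v)).trans
    (mul_le_mul hd hAv (eucNorm_nonneg _) ((eucNorm_nonneg _).trans hd))
  have h₂ := (abs_dotProduct_le_eucNorm_mul v' (A *ᵥ (v - v'))).trans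
    (mul_le_mul hv' hAd (eucNorm_nonneg _) hY)
  have h₃ := (abs_dotProduct_le_eucNorm_mul v' ((A - A') *ᵥ v')).trans
    (mul_le_mul hv' hAA' (eucNorm_nonneg _) hY)
  rw [hsplit]
  calc _ ≤ |(v - v') ⬝ᵥ A *ᵥ v| + |v' ⬝ᵥ A *ᵥ (v - v')| + |v' ⬝ᵥ (A - A') *ᵥ v'| :=
        abs_add_three _ _ _
    _ ≤ d * (Y / lam) + Y * (d / lam) + Y * (κ * Y) := by gcongr
    _ = 2 * d * Y / lam + κ * Y ^ 2 := by ring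

lemma abs_residual_quadForm_sub_le {y μ μ' : Fin N → ℝ} {C C' : Matrix (Fin N) (Fin N) ℝ}
    {lam musup d κ : ℝ} (hlam : 0 < lam)
    (hC : (C - lam • (1 : Matrix (Fin N) (Fin N) ℝ)).PosSemidef)
    (hμ : eucNorm μ ≤ musup) (hμ' : eucNorm μ' ≤ musup) (hd : eucNorm (μ - μ') ≤ d)
    (hκ : specNorm (C⁻¹ - C'⁻¹) ≤ κ) :
    |(y - μ) ⬝ᵥ C⁻¹ *ᵥ (y - μ) - (y - μ') ⬝ᵥ C'⁻¹ *ᵥ (y - μ')| ≤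
      2 * d * (eucNorm y + musup) / lam + κ * (eucNorm y + musup) ^ 2 := by
  refine abs_dotProduct_mulVec_sub_le hlam.le (eucNorm_inv_mulVec_le hlam hC)
    ((eucNorm_sub_le _ _).trans (add_le_add_right hμ _))
    ((eucNorm_sub_le _ _).trans (add_le_add_right hμ' _)) ?_ hκ
  rwa [sub_sub_sub_cancel_left, eucNorm_sub_comm]

lemma Real.abs_exp_sub_exp_le_of_nonpos {a b : ℝ} (ha : a ≤ 0) (hb : b ≤ 0) :
    |Real.exp a - Real.exp b| ≤ |a - b| := by
  wlog hba : b ≤ a generalizing a b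
  · rw [abs_sub_comm, abs_sub_comm a]
    exact this hb ha (le_of_not_ge hba)
  rw [abs_of_nonneg (sub_nonneg.2 (Real.exp_le_exp.2 hba)), abs_of_nonneg (sub_nonneg.2 hba)]
  -- `exp a - exp b = exp a * (1 - exp (b - a))` with `exp a ≤ 1` and `1 - exp (b - a) ≤ a - b`
  have h₁ := Real.add_one_le_exp (b - a)
  have h₂ : Real.exp b = Real.exp a * Real.exp (b - a) := by rw [← Real.exp_add]; ring_nf
  nlinarith [Real.exp_le_one_iff.2 ha, Real.exp_pos a]

lemma abs_prod_sub_prod_le {n : ℕ} {f g : Fin (n + 1) → ℝ} {ρ : ℝ} (hf : ∀ i, |f i| ≤ ρ)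
    (hg : ∀ i, |g i| ≤ ρ) : |∏ i, f i - ∏ i, g i| ≤ ρ ^ n * ∑ i, |f i - g i| := by
  induction n with
  | zero => simp
  | succ n ih =>
    have hρ : 0 ≤ ρ := (abs_nonneg _).trans (hf 0)
    have hF : |∏ i : Fin (n + 1), f i.succ| ≤ ρ ^ (n + 1) := by
      rw [Finset.abs_prod]
      exact (Finset.prod_le_prod (fun _ _ ↦ abs_nonneg _) fun i _ ↦ hf i.succ).trans (by simp)
    have ih' := ih (fun i ↦ hf i.succ) (fun i ↦ hg i.succ)
    rw [Fin.prod_univ_succ (f := f), Fin.prod_univ_succ (f := g), Fin.sum_univ_succ]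
    calc _ = |(f 0 - g 0) * ∏ i : Fin (n + 1), f i.succ
            + g 0 * (∏ i : Fin (n + 1), f i.succ - ∏ i : Fin (n + 1), g i.succ)| := by
            congr 1; ring
      _ ≤ |f 0 - g 0| * ρ ^ (n + 1) + ρ * (ρ ^ n * ∑ i : Fin (n + 1), |f i.succ - g i.succ|) := by
        refine (abs_add_le _ _).trans ?_
        rw [abs_mul, abs_mul]
        gcongr
        exact hg 0
      _ = _ := by ring

lemma abs_inv_sqrt_sub_inv_sqrt_le {a b c : ℝ} (hc : 0 < c) (ha : c ^ 2 ≤ a) (hb : c ^ 2 ≤ b) :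
    |(√a)⁻¹ - (√b)⁻¹| ≤ |a - b| / (2 * c ^ 3) := by
  have hsa : c ≤ √a := Real.le_sqrt_of_sq_le ha
  have hsb : c ≤ √b := Real.le_sqrt_of_sq_le hb
  have hsa0 : 0 < √a := hc.trans_le hsa
  have hsb0 : 0 < √b := hc.trans_le hsb
  have hkey : (√a)⁻¹ - (√b)⁻¹ = (b - a) / (√a * √b * (√a + √b)) := by
    have ha' : √a ^ 2 = a := Real.sq_sqrt ((sq_nonneg c).trans ha)
    have hb' : √b ^ 2 = b := Real.sq_sqrt ((sq_nonneg c).trans hb)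
    field_simp
    linear_combination hb' - ha'
  rw [hkey, abs_div, abs_sub_comm b,
    abs_of_pos (mul_pos (mul_pos hsa0 hsb0) (add_pos hsa0 hsb0))]
  refine div_le_div_of_nonneg_left (abs_nonneg _) (by positivity) ?_
  nlinarith [mul_le_mul hsa hsb hc.le hsa0.le]

lemma abs_exp_div_prod_sub_le {n : ℕ} {q q' s s' : Fin (n + 1) → ℝ} {c : ℝ} (hc : 0 < c)
    (hq : ∀ i, 0 ≤ q i) (hq' : ∀ i, 0 ≤ q' i) (hs : ∀ i, c ≤ s i) (hs' : ∀ i, c ≤ s' i) :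
    |Real.exp (-(1 / 2) * ∑ i, q i) / ∏ i, s i - Real.exp (-(1 / 2) * ∑ i, q' i) / ∏ i, s' i| ≤
      (c ^ (n + 1))⁻¹ * (1 / 2) * ∑ i, |q i - q' i| + (c ^ n)⁻¹ * ∑ i, |(s i)⁻¹ - (s' i)⁻¹| := by
  have hQ : 0 ≤ ∑ i, q i := Finset.sum_nonneg fun i _ ↦ hq i
  have hQ' : 0 ≤ ∑ i, q' i := Finset.sum_nonneg fun i _ ↦ hq' i
  set E := Real.exp (-(1 / 2) * ∑ i, q i)
  set E' := Real.exp (-(1 / 2) * ∑ i, q' i)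
  have hE : |E - E'| ≤ 1 / 2 * ∑ i, |q i - q' i| :=
    calc |E - E'| ≤ |-(1 / 2) * ∑ i, q i - -(1 / 2) * ∑ i, q' i| :=
          Real.abs_exp_sub_exp_le_of_nonpos (by linarith) (by linarith)
      _ = 1 / 2 * |∑ i, (q i - q' i)| := by
          rw [Finset.sum_sub_distrib, ← mul_sub, abs_mul]
          norm_num
      _ ≤ 1 / 2 * ∑ i, |q i - q' i| := by gcongr; exact Finset.abs_sum_le_sum_abs _ _
  have hE' : |E'| ≤ 1 := by
    rw [abs_of_pos (Real.exp_pos _)]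
    exact Real.exp_le_one_iff.2 (by linarith)
  have hinv {x : ℝ} (hx : c ≤ x) : |x⁻¹| ≤ c⁻¹ := by
    rw [abs_inv, abs_of_pos (hc.trans_le hx)]
    exact inv_anti₀ hc hx
  have hP : |∏ i, (s i)⁻¹| ≤ (c ^ (n + 1))⁻¹ := by
    rw [Finset.abs_prod, ← inv_pow]
    exact (Finset.prod_le_prod (fun _ _ ↦ abs_nonneg _) fun i _ ↦ hinv (hs i)).trans_eq (by simp)
  have hPP' := abs_prod_sub_prod_le (fun i ↦ hinv (hs i)) (fun i ↦ hinv (hs' i))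
  rw [inv_pow] at hPP'
  simp only [div_eq_mul_inv, ← Finset.prod_inv_distrib]
  calc _ = |(E - E') * ∏ i, (s i)⁻¹ + E' * (∏ i, (s i)⁻¹ - ∏ i, (s' i)⁻¹)| := by congr 1; ring
    _ ≤ |E - E'| * |∏ i, (s i)⁻¹| + |E'| * |∏ i, (s i)⁻¹ - ∏ i, (s' i)⁻¹| := by
        rw [← abs_mul, ← abs_mul]; exact abs_add_le _ _
    _ ≤ (1 / 2 * ∑ i, |q i - q' i|) * (c ^ (n + 1))⁻¹ +
          1 * ((c ^ n)⁻¹ * ∑ i, |(s i)⁻¹ - (s' i)⁻¹|) := by gcongr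
    _ = _ := by ring

lemma abs_exp_div_prod_sub_le_mul_sum {n : ℕ} {q q' s s' δ : Fin (n + 1) → ℝ} {c Θ K : ℝ}
    (hc : 1 ≤ c) (hΘ : 0 ≤ Θ) (hK : 0 ≤ K) (hδ : ∀ i, 0 ≤ δ i)
    (hq : ∀ i, 0 ≤ q i) (hq' : ∀ i, 0 ≤ q' i) (hs : ∀ i, c ≤ s i) (hs' : ∀ i, c ≤ s' i)
    (hqδ : ∀ i, |q i - q' i| ≤ Θ * δ i) (hsδ : ∀ i, |(s i)⁻¹ - (s' i)⁻¹| ≤ K / (2 * c ^ 3) * δ i) :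
    |Real.exp (-(1 / 2) * ∑ i, q i) / ∏ i, s i - Real.exp (-(1 / 2) * ∑ i, q' i) / ∏ i, s' i| ≤
      (Θ / c ^ (n + 1) + K / (2 * c ^ (n + 2))) * ∑ i, δ i := by
  have hc0 : 0 < c := one_pos.trans_le hc
  refine (abs_exp_div_prod_sub_le hc0 hq hq' hs hs').trans ?_
  calc _ ≤ (c ^ (n + 1))⁻¹ * (1 / 2) * ∑ i, Θ * δ i +
        (c ^ n)⁻¹ * ∑ i, K / (2 * c ^ 3) * δ i := by
        gcongr with i
        exacts [hqδ i, hsδ i]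
    _ = (Θ / (2 * c ^ (n + 1)) + K / (2 * c ^ (n + 3))) * ∑ i, δ i := by
        rw [← Finset.mul_sum, ← Finset.mul_sum]
        field_simp
        ring
    _ ≤ (Θ / c ^ (n + 1) + K / (2 * c ^ (n + 2))) * ∑ i, δ i := by
        have := Finset.sum_nonneg fun i (_ : i ∈ Finset.univ) ↦ hδ i
        gcongr
        · exact le_mul_of_one_le_left (by positivity) one_le_two
        · norm_num

theorem stmt_17_general {N : ℕ} (t : ℕ) (Z : Set ℝ)
    (y : Fin (t + 1) → Fin N → ℝ)
    (Kmu musup KINV KD lam : ℝ)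
    (hKmu : 0 ≤ Kmu) (hmusup : 0 ≤ musup) (hKINV : 0 ≤ KINV) (hKD : 0 ≤ KD)
    (hlam : 1 < lam)
    (mu : Fin (t + 1) → ℝ → Fin N → ℝ)
    (C : Fin (t + 1) → ℝ → Matrix (Fin N) (Fin N) ℝ)
    (hEig : ∀ i, ∀ x ∈ Z, (C i x - lam • (1 : Matrix (Fin N) (Fin N) ℝ)).PosSemidef)
    (hCinvLip : ∀ i, ∀ x ∈ Z, ∀ x' ∈ Z,
      specNorm ((C i x)⁻¹ - (C i x')⁻¹) ≤ KINV * |x - x'|)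
    (hdetLip : ∀ i, ∀ x ∈ Z, ∀ x' ∈ Z,
      |(C i x).det - (C i x').det| ≤ KD * |x - x'|)
    (hmuLip : ∀ i, ∀ x ∈ Z, ∀ x' ∈ Z, eucNorm (mu i x - mu i x') ≤ Kmu * |x - x'|)
    (hmuBdd : ∀ i, ∀ x ∈ Z, eucNorm (mu i x) ≤ musup) :
    ∀ x x' : Fin (t + 1) → ℝ, (∀ i, x i ∈ Z) → (∀ i, x' i ∈ Z) →
      |Lhat y mu C x - Lhat y mu C x'| ≤
        ((⨆ i : Fin (t + 1),
            (2 * Kmu * (eucNorm (y i) + musup) / lam + KINV * (eucNorm (y i) + musup) ^ 2)) /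
              lam ^ (((N : ℝ) * (t + 1)) / 2) +
          KD / (2 * lam ^ (((N : ℝ) * (t + 2)) / 2))) *
          ∑ i, |x i - x' i| := by
  intro x x' hx hx'
  have hlam0 : 0 < lam := by linarith
  set c := lam ^ ((N : ℝ) / 2)
  have hc : 1 ≤ c := Real.one_le_rpow hlam.le (by positivity)
  have hc_pow (m : ℕ) : c ^ m = lam ^ ((N : ℝ) * m / 2) := by
    rw [← Real.rpow_mul_natCast hlam0.le]; ring_nf
  have hdet (i) (z) (hz : z ∈ Z) : c ^ 2 ≤ (C i z).det := by
    rw [hc_pow, Nat.cast_ofNat, mul_div_cancel_right₀ _ two_ne_zero, Real.rpow_natCast]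
    simpa using (hEig i z hz).pow_card_le_det_of_sub_smul_one hlam0
  have hq_nonneg (i) (z) (hz : z ∈ Z) : 0 ≤ (y i - mu i z) ⬝ᵥ (C i z)⁻¹ *ᵥ (y i - mu i z) := by
    simpa using ((hEig i z hz).posDef_of_sub_smul_one hlam0).inv.posSemidef.dotProduct_mulVec_nonneg
      (y i - mu i z)
  set θ := fun i ↦ 2 * Kmu * (eucNorm (y i) + musup) / lam + KINV * (eucNorm (y i) + musup) ^ 2
  set Θ := ⨆ i, θ i
  have hθ (i) : θ i ≤ Θ := le_ciSup (Set.finite_range θ).bddAbove i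
  have hΘ : 0 ≤ Θ := (by have := eucNorm_nonneg (y 0); positivity : 0 ≤ θ 0).trans (hθ 0)
  have hquad (i) : |(y i - mu i (x i)) ⬝ᵥ (C i (x i))⁻¹ *ᵥ (y i - mu i (x i)) -
      (y i - mu i (x' i)) ⬝ᵥ (C i (x' i))⁻¹ *ᵥ (y i - mu i (x' i))| ≤ Θ * |x i - x' i| := by
    refine (abs_residual_quadForm_sub_le hlam0 (hEig i _ (hx i)) (hmuBdd i _ (hx i))
      (hmuBdd i _ (hx' i)) (hmuLip i _ (hx i) _ (hx' i)) (hCinvLip i _ (hx i) _ (hx' i))).trans ?_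
    calc _ = θ i * |x i - x' i| := by ring
      _ ≤ Θ * |x i - x' i| := by gcongr; exact hθ i
  have hsqrt (i) : |(√(C i (x i)).det)⁻¹ - (√(C i (x' i)).det)⁻¹| ≤
      KD / (2 * c ^ 3) * |x i - x' i| := by
    refine (abs_inv_sqrt_sub_inv_sqrt_le (by positivity) (hdet i _ (hx i))
      (hdet i _ (hx' i))).trans ?_
    rw [div_mul_eq_mul_div, mul_comm]
    gcongr
    exact hdetLip i _ (hx i) _ (hx' i)
  refine (abs_exp_div_prod_sub_le_mul_sum hc hΘ hKD (fun i ↦ abs_nonneg _)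
    (fun i ↦ hq_nonneg i _ (hx i)) (fun i ↦ hq_nonneg i _ (hx' i))
    (fun i ↦ Real.le_sqrt_of_sq_le (hdet i _ (hx i)))
    (fun i ↦ Real.le_sqrt_of_sq_le (hdet i _ (hx' i))) hquad hsqrt).trans_eq ?_
  rw [hc_pow, hc_pow]
  push_cast
  ring_nf

/-- **Central pathwise likelihood-ratio Lipschitz bound** in the proof of the key lemma
(Lemma 11) of the paper. -/
theorem stmt_17 {N : ℕ} (hN : 1 ≤ N) (t : ℕ) (Z : Set ℝ)
    (y : Fin (t + 1) → Fin N → ℝ)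
    (Kmu musup KINV KD lam : ℝ)
    (hKmu : 0 ≤ Kmu) (hmusup : 0 ≤ musup) (hKINV : 0 ≤ KINV) (hKD : 0 ≤ KD)
    (hlam : 1 < lam)
    (mu : Fin (t + 1) → ℝ → Fin N → ℝ)
    (C : Fin (t + 1) → ℝ → Matrix (Fin N) (Fin N) ℝ)
    (hPD : ∀ i, ∀ x ∈ Z, (C i x).PosDef)
    (hEig : ∀ i, ∀ x ∈ Z, (C i x - lam • (1 : Matrix (Fin N) (Fin N) ℝ)).PosSemidef)
    (hCinvLip : ∀ i, ∀ x ∈ Z, ∀ x' ∈ Z,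
      specNorm ((C i x)⁻¹ - (C i x')⁻¹) ≤ KINV * |x - x'|)
    (hdetLip : ∀ i, ∀ x ∈ Z, ∀ x' ∈ Z,
      |(C i x).det - (C i x').det| ≤ KD * |x - x'|)
    (hmuLip : ∀ i, ∀ x ∈ Z, ∀ x' ∈ Z, eucNorm (mu i x - mu i x') ≤ Kmu * |x - x'|)
    (hmuBdd : ∀ i, ∀ x ∈ Z, eucNorm (mu i x) ≤ musup) :
    ∀ x x' : Fin (t + 1) → ℝ, (∀ i, x i ∈ Z) → (∀ i, x' i ∈ Z) →
      |Lhat y mu C x - Lhat y mu C x'| ≤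
        ((⨆ i : Fin (t + 1),
            (2 * Kmu * (eucNorm (y i) + musup) / lam + KINV * (eucNorm (y i) + musup) ^ 2)) /
              lam ^ (((N : ℝ) * (t + 1)) / 2) +
          KD / (2 * lam ^ (((N : ℝ) * (t + 2)) / 2))) *
          ∑ i, |x i - x' i| :=
  stmt_17_general t Z y Kmu musup KINV KD lam hKmu hmusup hKINV hKD hlam mu C hEig hCinvLip hdetLip
    hmuLip hmuBdd
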